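/- arXiv:2503.12454 — 5 statements merged into one kernel-verified Lean document; each statement's English description precedes it below -/
import Mathlib

section
/- Suppose each loss gradient ∇Q(·;x_n) is δ_n-Lipschitz and set δ² = (1/N)Σ_n δ_n². Let σ² = (1/N)Σ_n ‖∇Q(w°;x_n)‖², where w° minimizes J(w) = (1/N)Σ_n Q(w;x_n). If i is uniformly distributed on {1,...,N}, then for any fixed w: E‖∇J(w) - ∇Q(w;x_i)‖² ≤ 6δ²‖w° - w‖² + 3σ². -/
/-!
The mean of a finite family of vectors minimises the mean squared distance to the family, so the
variance of the stochastic gradient is at most its second moment `(1/N) Σ ‖∇Q(w;xₙ)‖²`.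
Splitting `∇Q(w;xₙ) = (∇Q(w;xₙ) - ∇Q(w°;xₙ)) + ∇Q(w°;xₙ)` and using `(a + b)² ≤ 2a² + 2b²`
with the Lipschitz bound bounds that second moment by `2δ²‖w° - w‖² + 2σ²`.
-/

open Finset

theorem sum_norm_average_sub_sq_le {E ι : Type*} [NormedAddCommGroup E] [InnerProductSpace ℝ E]
    [Fintype ι] (f : ι → E) :
    ∑ i, ‖(Fintype.card ι : ℝ)⁻¹ • ∑ j, f j - f i‖ ^ 2 ≤ ∑ i, ‖f i‖ ^ 2 := by
  set c := (Fintype.card ι : ℝ)⁻¹ • ∑ j, f j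
  have hsum : inner ℝ c (∑ j, f j) = Fintype.card ι * ‖c‖ ^ 2 := by
    rcases isEmpty_or_nonempty ι with hι | hι
    · simp
    have hcard : (Fintype.card ι : ℝ) ≠ 0 := by positivity
    rw [show ∑ j, f j = (Fintype.card ι : ℝ) • c by simp [c, smul_smul, hcard],
      real_inner_smul_right, real_inner_self_eq_norm_sq]
  have hexpand : ∑ i, ‖c - f i‖ ^ 2 = ∑ i, ‖f i‖ ^ 2 - Fintype.card ι * ‖c‖ ^ 2 := by
    simp only [norm_sub_sq_real, sum_add_distrib, sum_sub_distrib, ← mul_sum, ← inner_sum,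
      hsum, sum_const, card_univ, nsmul_eq_mul]
    ring
  rw [hexpand]
  have : 0 ≤ (Fintype.card ι : ℝ) * ‖c‖ ^ 2 := by positivity
  linarith

theorem norm_sq_le_of_norm_sub_le {E F : Type*} [SeminormedAddCommGroup E]
    [SeminormedAddCommGroup F] {g : E → F} {K : ℝ} (hg : ∀ x y, ‖g x - g y‖ ≤ K * ‖x - y‖)
    (x y : E) : ‖g x‖ ^ 2 ≤ 2 * K ^ 2 * ‖y - x‖ ^ 2 + 2 * ‖g y‖ ^ 2 :=
  calc ‖g x‖ ^ 2 ≤ (‖g x - g y‖ + ‖g y‖) ^ 2 := by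
        gcongr; simpa using norm_add_le (g x - g y) (g y)
    _ ≤ 2 * (‖g x - g y‖ ^ 2 + ‖g y‖ ^ 2) := add_sq_le
    _ ≤ 2 * ((K * ‖y - x‖) ^ 2 + ‖g y‖ ^ 2) := by
        gcongr; simpa [norm_sub_rev x y] using hg x y
    _ = 2 * K ^ 2 * ‖y - x‖ ^ 2 + 2 * ‖g y‖ ^ 2 := by ring

theorem sgd_gradient_noise_bound_general
    {E : Type*} [NormedAddCommGroup E] [InnerProductSpace ℝ E]
    {N : ℕ}
    (gradQ : Fin N → E → E) (gradJ : E → E)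
    (δn : Fin N → ℝ) (δ σ : ℝ) (wo : E)
    (hgradJ : ∀ x, gradJ x = (N : ℝ)⁻¹ • ∑ n, gradQ n x)
    (hLip : ∀ n x y, ‖gradQ n x - gradQ n y‖ ≤ δn n * ‖x - y‖)
    (hδ : δ ^ 2 = (N : ℝ)⁻¹ * ∑ n, δn n ^ 2)
    (hσ : σ ^ 2 = (N : ℝ)⁻¹ * ∑ n, ‖gradQ n wo‖ ^ 2)
    (w : E) :
    (N : ℝ)⁻¹ * ∑ n, ‖gradJ w - gradQ n w‖ ^ 2 ≤
      6 * δ ^ 2 * ‖wo - w‖ ^ 2 + 3 * σ ^ 2 := by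
  have hvariance : ∑ n, ‖gradJ w - gradQ n w‖ ^ 2 ≤ ∑ n, ‖gradQ n w‖ ^ 2 := by
    simpa [hgradJ] using sum_norm_average_sub_sq_le (fun n => gradQ n w)
  have hmoment : ∑ n, ‖gradQ n w‖ ^ 2 ≤
      ∑ n, (2 * δn n ^ 2 * ‖wo - w‖ ^ 2 + 2 * ‖gradQ n wo‖ ^ 2) :=
    sum_le_sum fun n _ => norm_sq_le_of_norm_sub_le (hLip n) w wo
  have hmean : (N : ℝ)⁻¹ * ∑ n, (2 * δn n ^ 2 * ‖wo - w‖ ^ 2 + 2 * ‖gradQ n wo‖ ^ 2) =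
      2 * δ ^ 2 * ‖wo - w‖ ^ 2 + 2 * σ ^ 2 := by
    rw [hδ, hσ, sum_add_distrib, ← sum_mul, ← mul_sum, ← mul_sum]
    ring
  have hNinv : (0 : ℝ) ≤ (N : ℝ)⁻¹ := by positivity
  calc (N : ℝ)⁻¹ * ∑ n, ‖gradJ w - gradQ n w‖ ^ 2
      ≤ (N : ℝ)⁻¹ * ∑ n, (2 * δn n ^ 2 * ‖wo - w‖ ^ 2 + 2 * ‖gradQ n wo‖ ^ 2) :=
        mul_le_mul_of_nonneg_left (hvariance.trans hmoment) hNinv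
    _ = 2 * δ ^ 2 * ‖wo - w‖ ^ 2 + 2 * σ ^ 2 := hmean
    _ ≤ 6 * δ ^ 2 * ‖wo - w‖ ^ 2 + 3 * σ ^ 2 := by
        gcongr <;> norm_num

/-- Variance bound of the SGD gradient noise: if each component gradient is
`δₙ`-Lipschitz, `δ² = (1/N)Σ δₙ²`, `σ² = (1/N)Σ ‖∇Q(w°;xₙ)‖²`, and `w°` minimizes
`J = (1/N)Σ Q(·;xₙ)`, then for any fixed `w`,
`E‖∇J(w) - ∇Q(w;xᵢ)‖² ≤ 6δ²‖w° - w‖² + 3σ²` with `i` uniform on `{1,…,N}`. -/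
theorem sgd_gradient_noise_bound
    {E : Type*} [NormedAddCommGroup E] [InnerProductSpace ℝ E] [CompleteSpace E]
    {N : ℕ} (hN : 0 < N)
    (Q : Fin N → E → ℝ) (gradQ : Fin N → E → E) (J : E → ℝ) (gradJ : E → E)
    (δn : Fin N → ℝ) (δ σ : ℝ) (wo : E)
    (hQ : ∀ n x, HasGradientAt (Q n) (gradQ n x) x)
    (hJ : ∀ x, J x = (N : ℝ)⁻¹ * ∑ n, Q n x)
    (hgradJ : ∀ x, gradJ x = (N : ℝ)⁻¹ • ∑ n, gradQ n x)
    (hLip : ∀ n x y, ‖gradQ n x - gradQ n y‖ ≤ δn n * ‖x - y‖)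
    (hδ : δ ^ 2 = (N : ℝ)⁻¹ * ∑ n, δn n ^ 2)
    (hσ : σ ^ 2 = (N : ℝ)⁻¹ * ∑ n, ‖gradQ n wo‖ ^ 2)
    (hmin : IsMinOn J Set.univ wo)
    (w : E) :
    (N : ℝ)⁻¹ * ∑ n, ‖gradJ w - gradQ n w‖ ^ 2 ≤
      6 * δ ^ 2 * ‖wo - w‖ ^ 2 + 3 * σ ^ 2 :=
  sgd_gradient_noise_bound_general gradQ gradJ δn δ σ wo hgradJ hLip hδ hσ w
end

section
/- Under the Lipschitz-gradient assumption with mean-square constant δ², the SVRG gradient estimator g(w) = ∇J(w̄) - ∇Q(w̄;x_i) + ∇Q(w;x_i), with i uniform on {1,...,N}, satisfies for any fixed w and snapshot w̄: E‖∇J(w) - g(w)‖² ≤ 8δ²(‖w° - w‖² + ‖w° - w̄‖²). -/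
/-- Variance bound of the SVRG gradient noise: with `g(w) = ∇J(w̄) - ∇Q(w̄;xᵢ) + ∇Q(w;xᵢ)`
and `i` uniform on `{1,…,N}`, for any fixed `w` and snapshot `w̄`,
`E‖∇J(w) - g(w)‖² ≤ 8δ²(‖w° - w‖² + ‖w° - w̄‖²)`. -/
theorem svrg_gradient_noise_bound
    {E : Type*} [NormedAddCommGroup E] [InnerProductSpace ℝ E] [CompleteSpace E]
    {N : ℕ} (hN : 0 < N)
    (Q : Fin N → E → ℝ) (gradQ : Fin N → E → E) (J : E → ℝ) (gradJ : E → E)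
    (δn : Fin N → ℝ) (δ : ℝ) (wo : E)
    (hQ : ∀ n x, HasGradientAt (Q n) (gradQ n x) x)
    (hJ : ∀ x, J x = (N : ℝ)⁻¹ * ∑ n, Q n x)
    (hgradJ : ∀ x, gradJ x = (N : ℝ)⁻¹ • ∑ n, gradQ n x)
    (hLip : ∀ n x y, ‖gradQ n x - gradQ n y‖ ≤ δn n * ‖x - y‖)
    (hδ : δ ^ 2 = (N : ℝ)⁻¹ * ∑ n, δn n ^ 2)
    (hmin : IsMinOn J Set.univ wo)
    (w wbar : E) :
    (N : ℝ)⁻¹ * ∑ n, ‖gradJ w - (gradJ wbar - gradQ n wbar + gradQ n w)‖ ^ 2 ≤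
      8 * δ ^ 2 * (‖wo - w‖ ^ 2 + ‖wo - wbar‖ ^ 2) := by
  have hNpos : (0:ℝ) < (N:ℝ) := by exact_mod_cast hN
  set C := ‖wo - w‖ with hC
  set D := ‖wo - wbar‖ with hD
  -- per-sample deviations
  set a : Fin N → E := fun n => gradQ n w - gradQ n wo with ha
  set b : Fin N → E := fun n => gradQ n wbar - gradQ n wo with hb
  have han : ∀ n, ‖a n‖ ≤ δn n * C := by
    intro n
    have := hLip n w wo
    simpa [ha, hC, norm_sub_rev] using this
  have hbn : ∀ n, ‖b n‖ ≤ δn n * D := by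
    intro n
    have := hLip n wbar wo
    simpa [hb, hD, norm_sub_rev] using this
  have han2 : ∀ n, ‖a n‖ ^ 2 ≤ δn n ^ 2 * C ^ 2 := by
    intro n
    have := pow_le_pow_left₀ (norm_nonneg (a n)) (han n) 2
    calc ‖a n‖ ^ 2 ≤ (δn n * C) ^ 2 := this
      _ = δn n ^ 2 * C ^ 2 := by ring
  have hbn2 : ∀ n, ‖b n‖ ^ 2 ≤ δn n ^ 2 * D ^ 2 := by
    intro n
    have := pow_le_pow_left₀ (norm_nonneg (b n)) (hbn n) 2
    calc ‖b n‖ ^ 2 ≤ (δn n * D) ^ 2 := this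
      _ = δn n ^ 2 * D ^ 2 := by ring
  -- Cauchy–Schwarz for the mean of the δn's
  have hCS : ((N:ℝ)⁻¹ * ∑ n, δn n) ^ 2 ≤ (N:ℝ)⁻¹ * ∑ n, δn n ^ 2 := by
    have h := sq_sum_le_card_mul_sum_sq (s := Finset.univ) (f := δn)
    have hcard : ((Finset.univ : Finset (Fin N)).card : ℝ) = (N:ℝ) := by simp
    rw [hcard] at h
    have : ((N:ℝ)⁻¹ * ∑ n, δn n) ^ 2 = (N:ℝ)⁻¹ * (N:ℝ)⁻¹ * (∑ n, δn n) ^ 2 := by ring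
    rw [this]
    calc (N:ℝ)⁻¹ * (N:ℝ)⁻¹ * (∑ n, δn n) ^ 2
        ≤ (N:ℝ)⁻¹ * (N:ℝ)⁻¹ * ((N:ℝ) * ∑ n, δn n ^ 2) := by
          apply mul_le_mul_of_nonneg_left h
          positivity
      _ = (N:ℝ)⁻¹ * ((N:ℝ)⁻¹ * (N:ℝ)) * ∑ n, δn n ^ 2 := by ring
      _ = (N:ℝ)⁻¹ * ∑ n, δn n ^ 2 := by
          rw [inv_mul_cancel₀ (ne_of_gt hNpos)]; ring
  -- mean gradient differences
  have hA : gradJ w - gradJ wo = (N:ℝ)⁻¹ • ∑ n, a n := by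
    rw [hgradJ, hgradJ, ← smul_sub, ← Finset.sum_sub_distrib]
  have hB : gradJ wbar - gradJ wo = (N:ℝ)⁻¹ • ∑ n, b n := by
    rw [hgradJ, hgradJ, ← smul_sub, ← Finset.sum_sub_distrib]
  have hnormA : ‖gradJ w - gradJ wo‖ ≤ (N:ℝ)⁻¹ * ∑ n, δn n * C := by
    rw [hA, norm_smul]
    simp only [norm_inv, Real.norm_natCast]
    apply mul_le_mul_of_nonneg_left _ (by positivity)
    exact (norm_sum_le _ _).trans (Finset.sum_le_sum fun n _ => han n)
  have hnormB : ‖gradJ wbar - gradJ wo‖ ≤ (N:ℝ)⁻¹ * ∑ n, δn n * D := by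
    rw [hB, norm_smul]
    simp only [norm_inv, Real.norm_natCast]
    apply mul_le_mul_of_nonneg_left _ (by positivity)
    exact (norm_sum_le _ _).trans (Finset.sum_le_sum fun n _ => hbn n)
  have hA2 : ‖gradJ w - gradJ wo‖ ^ 2 ≤ δ ^ 2 * C ^ 2 := by
    have h1 := pow_le_pow_left₀ (norm_nonneg _) hnormA 2
    have h2 : ((N:ℝ)⁻¹ * ∑ n, δn n * C) ^ 2 = ((N:ℝ)⁻¹ * ∑ n, δn n) ^ 2 * C ^ 2 := by
      rw [← Finset.sum_mul]; ring
    calc ‖gradJ w - gradJ wo‖ ^ 2 ≤ ((N:ℝ)⁻¹ * ∑ n, δn n) ^ 2 * C ^ 2 := by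
          rw [← h2]; exact h1
      _ ≤ ((N:ℝ)⁻¹ * ∑ n, δn n ^ 2) * C ^ 2 :=
          mul_le_mul_of_nonneg_right hCS (by positivity)
      _ = δ ^ 2 * C ^ 2 := by rw [← hδ]
  have hB2 : ‖gradJ wbar - gradJ wo‖ ^ 2 ≤ δ ^ 2 * D ^ 2 := by
    have h1 := pow_le_pow_left₀ (norm_nonneg _) hnormB 2
    have h2 : ((N:ℝ)⁻¹ * ∑ n, δn n * D) ^ 2 = ((N:ℝ)⁻¹ * ∑ n, δn n) ^ 2 * D ^ 2 := by
      rw [← Finset.sum_mul]; ring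
    calc ‖gradJ wbar - gradJ wo‖ ^ 2 ≤ ((N:ℝ)⁻¹ * ∑ n, δn n) ^ 2 * D ^ 2 := by
          rw [← h2]; exact h1
      _ ≤ ((N:ℝ)⁻¹ * ∑ n, δn n ^ 2) * D ^ 2 :=
          mul_le_mul_of_nonneg_right hCS (by positivity)
      _ = δ ^ 2 * D ^ 2 := by rw [← hδ]
  -- pointwise bound on each summand
  have hterm : ∀ n, ‖gradJ w - (gradJ wbar - gradQ n wbar + gradQ n w)‖ ^ 2 ≤
      4 * (‖gradJ w - gradJ wo‖ ^ 2 + ‖gradJ wbar - gradJ wo‖ ^ 2 + ‖a n‖ ^ 2 + ‖b n‖ ^ 2) := by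
    intro n
    have hdecomp : gradJ w - (gradJ wbar - gradQ n wbar + gradQ n w) =
        (gradJ w - gradJ wo) - (gradJ wbar - gradJ wo) - a n + b n := by
      simp [ha, hb]; abel
    have hnorm : ‖gradJ w - (gradJ wbar - gradQ n wbar + gradQ n w)‖ ≤
        ‖gradJ w - gradJ wo‖ + ‖gradJ wbar - gradJ wo‖ + ‖a n‖ + ‖b n‖ := by
      rw [hdecomp]
      calc ‖(gradJ w - gradJ wo) - (gradJ wbar - gradJ wo) - a n + b n‖
          ≤ ‖(gradJ w - gradJ wo) - (gradJ wbar - gradJ wo) - a n‖ + ‖b n‖ := norm_add_le _ _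
        _ ≤ ‖(gradJ w - gradJ wo) - (gradJ wbar - gradJ wo)‖ + ‖a n‖ + ‖b n‖ := by
            gcongr; exact norm_sub_le _ _
        _ ≤ ‖gradJ w - gradJ wo‖ + ‖gradJ wbar - gradJ wo‖ + ‖a n‖ + ‖b n‖ := by
            gcongr; exact norm_sub_le _ _
    have hsq := pow_le_pow_left₀ (norm_nonneg _) hnorm 2
    nlinarith [norm_nonneg (gradJ w - gradJ wo), norm_nonneg (gradJ wbar - gradJ wo),
      norm_nonneg (a n), norm_nonneg (b n),
      sq_nonneg (‖gradJ w - gradJ wo‖ - ‖gradJ wbar - gradJ wo‖),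
      sq_nonneg (‖gradJ w - gradJ wo‖ - ‖a n‖), sq_nonneg (‖gradJ w - gradJ wo‖ - ‖b n‖),
      sq_nonneg (‖gradJ wbar - gradJ wo‖ - ‖a n‖), sq_nonneg (‖gradJ wbar - gradJ wo‖ - ‖b n‖),
      sq_nonneg (‖a n‖ - ‖b n‖)]
  -- sum up
  have hsum : ∑ n, ‖gradJ w - (gradJ wbar - gradQ n wbar + gradQ n w)‖ ^ 2 ≤
      (N:ℝ) * (8 * δ ^ 2 * (C ^ 2 + D ^ 2)) := by
    calc ∑ n, ‖gradJ w - (gradJ wbar - gradQ n wbar + gradQ n w)‖ ^ 2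
        ≤ ∑ n, 4 * (‖gradJ w - gradJ wo‖ ^ 2 + ‖gradJ wbar - gradJ wo‖ ^ 2
            + ‖a n‖ ^ 2 + ‖b n‖ ^ 2) := Finset.sum_le_sum fun n _ => hterm n
      _ ≤ ∑ n, 4 * (δ ^ 2 * C ^ 2 + δ ^ 2 * D ^ 2 + δn n ^ 2 * C ^ 2 + δn n ^ 2 * D ^ 2) := by
          apply Finset.sum_le_sum; intro n _
          linarith [hA2, hB2, han2 n, hbn2 n]
      _ = 4 * ((N:ℝ) * (δ ^ 2 * C ^ 2 + δ ^ 2 * D ^ 2)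
            + (∑ n, δn n ^ 2) * C ^ 2 + (∑ n, δn n ^ 2) * D ^ 2) := by
          have hptw : ∀ n : Fin N,
              4 * (δ ^ 2 * C ^ 2 + δ ^ 2 * D ^ 2 + δn n ^ 2 * C ^ 2 + δn n ^ 2 * D ^ 2)
                = 4 * (δ ^ 2 * C ^ 2 + δ ^ 2 * D ^ 2) + (4 * C ^ 2 + 4 * D ^ 2) * δn n ^ 2 :=
            fun n => by ring
          rw [Finset.sum_congr rfl fun n _ => hptw n, Finset.sum_add_distrib,
            Finset.sum_const, ← Finset.mul_sum]
          simp only [Finset.card_univ, Fintype.card_fin, nsmul_eq_mul]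
          ring
      _ = (N:ℝ) * (8 * δ ^ 2 * (C ^ 2 + D ^ 2)) := by
          have hsd : (∑ n, δn n ^ 2) = (N:ℝ) * δ ^ 2 := by
            rw [hδ]; field_simp
          rw [hsd]; ring
  calc (N:ℝ)⁻¹ * ∑ n, ‖gradJ w - (gradJ wbar - gradQ n wbar + gradQ n w)‖ ^ 2
      ≤ (N:ℝ)⁻¹ * ((N:ℝ) * (8 * δ ^ 2 * (C ^ 2 + D ^ 2))) :=
        mul_le_mul_of_nonneg_left hsum (by positivity)
    _ = 8 * δ ^ 2 * (C ^ 2 + D ^ 2) := by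
        rw [← mul_assoc, inv_mul_cancel₀ (ne_of_gt hNpos), one_mul]
end

section
/- For α ∈ [0,1], the α-SVRG gradient estimator g_α(w) = α(∇J(w̄) - ∇Q(w̄;x_i)) + ∇Q(w;x_i), with i uniform on {1,...,N}, satisfies for any fixed w and w̄: E‖∇J(w) - g_α(w)‖² ≤ (2α+6)δ²‖w° - w‖² + 8αδ²‖w° - w̄‖² + 3(1-α)σ². -/
/-!
With `Bᵢ = ∇Qᵢ(w) - ∇Qᵢ(w°)`, `Cᵢ = ∇Qᵢ(w̄) - ∇Qᵢ(w°)` and `hᵢ = ∇Qᵢ(w°)`, the noise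
`∇J(w) - g_α(w)` is `-(Bᵢ - B̄) + α (Cᵢ - C̄) - (1 - α)(hᵢ - h̄)`, bars denoting averages over `i`.
By `‖a + b + c‖² ≤ 3‖a‖² + 3‖b‖² + 3‖c‖²` its second moment is at most three times the sum of
the variances of `B`, `αC` and `(1 - α)h`; a variance is at most the second moment, and the
Lipschitz bounds control those of `B` and `C` by `δ²‖w - w°‖²` and `δ²‖w̄ - w°‖²`.
For `α ∈ [0, 1]` the coefficients `3`, `3α²`, `3(1 - α)²` are below `2α + 6`, `8α`, `3(1 - α)`.
-/

open Finset

theorem norm_add₃_sq_le {E : Type*} [SeminormedAddCommGroup E] (x y z : E) :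
    ‖x + y + z‖ ^ 2 ≤ 3 * ‖x‖ ^ 2 + 3 * ‖y‖ ^ 2 + 3 * ‖z‖ ^ 2 := by
  have h : ‖x + y + z‖ ≤ ‖x‖ + ‖y‖ + ‖z‖ := norm_add₃_le
  nlinarith [norm_nonneg (x + y + z), norm_nonneg x, norm_nonneg y, norm_nonneg z,
    sq_nonneg (‖x‖ - ‖y‖), sq_nonneg (‖x‖ - ‖z‖), sq_nonneg (‖y‖ - ‖z‖)]

section

variable {E : Type*} [NormedAddCommGroup E] [InnerProductSpace ℝ E]
  {ι : Type*} [Fintype ι]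

theorem sum_norm_sub_mean_sq_le (v : ι → E) :
    ∑ i, ‖v i - (Fintype.card ι : ℝ)⁻¹ • ∑ j, v j‖ ^ 2 ≤ ∑ i, ‖v i‖ ^ 2 := by
  set s := (Fintype.card ι : ℝ)⁻¹ • ∑ j, v j
  have hsum : ∑ j, v j = (Fintype.card ι : ℝ) • s := by
    rcases (Fintype.card ι).eq_zero_or_pos with h | h
    · have : IsEmpty ι := Fintype.card_eq_zero_iff.mp h
      simp
    · rw [smul_inv_smul₀ (by positivity)]
  calc ∑ i, ‖v i - s‖ ^ 2
      = ∑ i, ‖v i‖ ^ 2 - 2 * inner ℝ (∑ i, v i) s + Fintype.card ι * ‖s‖ ^ 2 := by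
        simp_rw [norm_sub_sq_real, sum_add_distrib, sum_sub_distrib, sum_inner, mul_sum]
        simp
    _ = ∑ i, ‖v i‖ ^ 2 - Fintype.card ι * ‖s‖ ^ 2 := by
        rw [hsum, real_inner_smul_left, real_inner_self_eq_norm_sq]; ring
    _ ≤ ∑ i, ‖v i‖ ^ 2 := sub_le_self _ (by positivity)

theorem sum_norm_sub_mean_sq_le_of_lipschitz {g : ι → E → E} {gbar : E → E} {L : ι → ℝ}
    (hgbar : ∀ x, gbar x = (Fintype.card ι : ℝ)⁻¹ • ∑ i, g i x)
    (hL : ∀ i x y, ‖g i x - g i y‖ ≤ L i * ‖x - y‖) (x y : E) :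
    ∑ i, ‖(g i x - g i y) - (gbar x - gbar y)‖ ^ 2 ≤ (∑ i, L i ^ 2) * ‖x - y‖ ^ 2 := by
  have hmean : gbar x - gbar y = (Fintype.card ι : ℝ)⁻¹ • ∑ i, (g i x - g i y) := by
    rw [hgbar, hgbar, sum_sub_distrib, smul_sub]
  rw [hmean, sum_mul]
  refine (sum_norm_sub_mean_sq_le _).trans (sum_le_sum fun i _ => ?_)
  rw [← mul_pow]
  exact pow_le_pow_left₀ (norm_nonneg _) (hL i x y) 2

theorem sum_norm_sq_svrg_noise_le {g : ι → E → E} {gbar : E → E} {L : ι → ℝ}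
    (hgbar : ∀ x, gbar x = (Fintype.card ι : ℝ)⁻¹ • ∑ i, g i x)
    (hL : ∀ i x y, ‖g i x - g i y‖ ≤ L i * ‖x - y‖) (α : ℝ) (w wbar wo : E) :
    ∑ i, ‖gbar w - (α • (gbar wbar - g i wbar) + g i w)‖ ^ 2 ≤
      3 * ((∑ i, L i ^ 2) * ‖w - wo‖ ^ 2) + 3 * α ^ 2 * ((∑ i, L i ^ 2) * ‖wbar - wo‖ ^ 2)
        + 3 * (1 - α) ^ 2 * ∑ i, ‖g i wo‖ ^ 2 := by
  have hsplit : ∀ i, gbar w - (α • (gbar wbar - g i wbar) + g i w) =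
      -((g i w - g i wo) - (gbar w - gbar wo)) + α • ((g i wbar - g i wo) - (gbar wbar - gbar wo))
        - (1 - α) • (g i wo - (Fintype.card ι : ℝ)⁻¹ • ∑ j, g j wo) := by
    intro i
    rw [← hgbar]
    module
  have hpoint : ∀ i, ‖gbar w - (α • (gbar wbar - g i wbar) + g i w)‖ ^ 2 ≤
      3 * ‖(g i w - g i wo) - (gbar w - gbar wo)‖ ^ 2
        + 3 * α ^ 2 * ‖(g i wbar - g i wo) - (gbar wbar - gbar wo)‖ ^ 2
        + 3 * (1 - α) ^ 2 * ‖g i wo - (Fintype.card ι : ℝ)⁻¹ • ∑ j, g j wo‖ ^ 2 := by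
    intro i
    rw [hsplit, sub_eq_add_neg]
    refine (norm_add₃_sq_le _ _ _).trans_eq ?_
    simp only [norm_neg, norm_smul, mul_pow, Real.norm_eq_abs, sq_abs]
    ring
  refine (sum_le_sum fun i _ => hpoint i).trans ?_
  simp only [sum_add_distrib, ← mul_sum]
  gcongr 3 * ?_ + _ * ?_ + _ * ?_
  · exact sum_norm_sub_mean_sq_le_of_lipschitz hgbar hL w wo
  · exact sum_norm_sub_mean_sq_le_of_lipschitz hgbar hL wbar wo
  · exact sum_norm_sub_mean_sq_le _

end

theorem alpha_svrg_gradient_noise_bound_general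
    {E : Type*} [NormedAddCommGroup E] [InnerProductSpace ℝ E]
    {N : ℕ}
    (gradQ : Fin N → E → E) (gradJ : E → E)
    (δn : Fin N → ℝ) (δ σ α : ℝ) (wo : E)
    (hα0 : 0 ≤ α) (hα1 : α ≤ 1)
    (hgradJ : ∀ x, gradJ x = (N : ℝ)⁻¹ • ∑ n, gradQ n x)
    (hLip : ∀ n x y, ‖gradQ n x - gradQ n y‖ ≤ δn n * ‖x - y‖)
    (hδ : δ ^ 2 = (N : ℝ)⁻¹ * ∑ n, δn n ^ 2)
    (hσ : σ ^ 2 = (N : ℝ)⁻¹ * ∑ n, ‖gradQ n wo‖ ^ 2)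
    (w wbar : E) :
    (N : ℝ)⁻¹ * ∑ n,
        ‖gradJ w - (α • (gradJ wbar - gradQ n wbar) + gradQ n w)‖ ^ 2 ≤
      (2 * α + 6) * δ ^ 2 * ‖wo - w‖ ^ 2 + 8 * α * δ ^ 2 * ‖wo - wbar‖ ^ 2
        + 3 * (1 - α) * σ ^ 2 := by
  have hsum := sum_norm_sq_svrg_noise_le (by simpa using hgradJ) hLip α w wbar wo
  rw [norm_sub_rev w, norm_sub_rev wbar] at hsum
  have hα : 3 * α ^ 2 ≤ 8 * α := by nlinarith
  have hα' : 3 * (1 - α) ^ 2 ≤ 3 * (1 - α) := by nlinarith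
  calc _ ≤ (N : ℝ)⁻¹ * (3 * ((∑ n, δn n ^ 2) * ‖wo - w‖ ^ 2)
          + 3 * α ^ 2 * ((∑ n, δn n ^ 2) * ‖wo - wbar‖ ^ 2)
          + 3 * (1 - α) ^ 2 * ∑ n, ‖gradQ n wo‖ ^ 2) := by gcongr
    _ = 3 * δ ^ 2 * ‖wo - w‖ ^ 2 + 3 * α ^ 2 * δ ^ 2 * ‖wo - wbar‖ ^ 2
          + 3 * (1 - α) ^ 2 * σ ^ 2 := by rw [hδ, hσ]; ring
    _ ≤ _ := by
      gcongr ?_ * _ * _ + ?_ * _ * _ + ?_ * _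
      linarith

/-- Variance bound of the α-SVRG gradient noise: with
`g_α(w) = α(∇J(w̄) - ∇Q(w̄;xᵢ)) + ∇Q(w;xᵢ)` and `i` uniform on `{1,…,N}`,
for any fixed `w` and `w̄`,
`E‖∇J(w) - g_α(w)‖² ≤ (2α+6)δ²‖w°-w‖² + 8αδ²‖w°-w̄‖² + 3(1-α)σ²`. -/
theorem alpha_svrg_gradient_noise_bound
    {E : Type*} [NormedAddCommGroup E] [InnerProductSpace ℝ E] [CompleteSpace E]
    {N : ℕ} (hN : 0 < N)
    (Q : Fin N → E → ℝ) (gradQ : Fin N → E → E) (J : E → ℝ) (gradJ : E → E)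
    (δn : Fin N → ℝ) (δ σ α : ℝ) (wo : E)
    (hα0 : 0 ≤ α) (hα1 : α ≤ 1)
    (hQ : ∀ n x, HasGradientAt (Q n) (gradQ n x) x)
    (hJ : ∀ x, J x = (N : ℝ)⁻¹ * ∑ n, Q n x)
    (hgradJ : ∀ x, gradJ x = (N : ℝ)⁻¹ • ∑ n, gradQ n x)
    (hLip : ∀ n x y, ‖gradQ n x - gradQ n y‖ ≤ δn n * ‖x - y‖)
    (hδ : δ ^ 2 = (N : ℝ)⁻¹ * ∑ n, δn n ^ 2)
    (hσ : σ ^ 2 = (N : ℝ)⁻¹ * ∑ n, ‖gradQ n wo‖ ^ 2)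
    (hmin : IsMinOn J Set.univ wo)
    (w wbar : E) :
    (N : ℝ)⁻¹ * ∑ n,
        ‖gradJ w - (α • (gradJ wbar - gradQ n wbar) + gradQ n w)‖ ^ 2 ≤
      (2 * α + 6) * δ ^ 2 * ‖wo - w‖ ^ 2 + 8 * α * δ ^ 2 * ‖wo - wbar‖ ^ 2
        + 3 * (1 - α) * σ ^ 2 :=
  alpha_svrg_gradient_noise_bound_general gradQ gradJ δn δ σ α wo hα0 hα1 hgradJ hLip hδ hσ w wbar
end

section
/- Let J be ν-strongly convex with minimizer w° and suppose the stochastic gradient satisfies E‖∇J(w) - ĝ(w)‖² ≤ 6δ²‖w° - w‖² + 3σ² for all w. Then the SGD iterates w_i = w_{i-1} - μ ĝ(w_{i-1}) with constant learning rate μ < ν/(7δ²) satisfy E‖w° - w_i‖² ≤ (1-μν)^i ‖w° - w_0‖² + 3μσ²/ν. -/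
/-!
Strong convexity gives `ν‖x - w°‖² ≤ ⟪∇J x, x - w°⟫` and, since `∇J w° = 0`, the Lipschitz bound
gives `‖∇J x‖ ≤ δ‖x - w°‖`. Splitting the mean square of `w° - (x - μ g_n x)` over the index `n`
into the square of its mean `w° - (x - μ ∇J x)` plus the gradient noise, one SGD step from a
fixed point `x` satisfies `𝔼‖w° - x⁺‖² ≤ (1 - μν)‖w° - x‖² + 3μ²σ²` as soon as `7μδ² ≤ ν`.
Since the `i`-th iterate only depends on the first `i` indices, averaging over the last index
first turns this into `e (i+1) ≤ (1 - μν) e i + 3μ²σ²` for the mean square errors `e i`, and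
unrolling this recursion gives the claim. The factor `1 - μν` is nonnegative because a strong
convexity constant never exceeds a Lipschitz constant of the gradient.
-/
open Set InnerProductSpace Finset

theorem ConvexOn.add_fderiv_sub_le {E : Type*} [NormedAddCommGroup E] [NormedSpace ℝ E]
    {s : Set E} {f : E → ℝ} {f' : E →L[ℝ] ℝ} {x y : E}
    (hf : ConvexOn ℝ s f) (hx : x ∈ s) (hy : y ∈ s) (hf' : HasFDerivAt f f' x) :
    f x + f' (y - x) ≤ f y := by
  have hline := hf.comp_affineMap (AffineMap.lineMap (k := ℝ) x y)
  have hd : HasDerivAt (f ∘ AffineMap.lineMap (k := ℝ) x y) (f' (y - x)) 0 :=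
    (AffineMap.lineMap_apply_zero x y (k := ℝ) ▸ hf').comp_hasDerivAt 0
      AffineMap.hasDerivAt_lineMap
  have hslope := hline.le_slope_of_hasDerivAt (x := 0) (y := 1) (by simpa using hx)
    (by simpa using hy) zero_lt_one hd
  simp only [slope_def_field, Function.comp_apply, AffineMap.lineMap_apply_one,
    AffineMap.lineMap_apply_zero, sub_zero, div_one] at hslope
  linarith

theorem StrongConvexOn.add_inner_add_le {E : Type*} [NormedAddCommGroup E] [InnerProductSpace ℝ E]
    [CompleteSpace E] {s : Set E} {J : E → ℝ} {ν : ℝ} {G x y : E}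
    (hJ : StrongConvexOn s ν J) (hx : x ∈ s) (hy : y ∈ s) (hG : HasGradientAt J G x) :
    J x + inner ℝ G (y - x) + ν / 2 * ‖y - x‖ ^ 2 ≤ J y := by
  have key := (strongConvexOn_iff_convex.mp hJ).add_fderiv_sub_le hx hy
    (hG.hasFDerivAt.sub ((hasStrictFDerivAt_norm_sq x).hasFDerivAt.const_mul (ν / 2)))
  have hsq : ‖y‖ ^ 2 = ‖x‖ ^ 2 + 2 * inner ℝ x (y - x) + ‖y - x‖ ^ 2 := by
    rw [← norm_add_sq_real, add_sub_cancel]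
  simp only [sub_apply, toDual_apply_apply, smul_apply, coe_innerSL_apply, nsmul_eq_mul,
    Nat.cast_ofNat, smul_eq_mul] at key
  rw [hsq] at key
  linarith

theorem StrongConvexOn.mul_norm_sq_le_inner_sub {E : Type*} [NormedAddCommGroup E]
    [InnerProductSpace ℝ E] [CompleteSpace E] {s : Set E} {J : E → ℝ} {ν : ℝ} {x y Gx Gy : E}
    (hJ : StrongConvexOn s ν J) (hx : x ∈ s) (hy : y ∈ s) (hGx : HasGradientAt J Gx x)
    (hGy : HasGradientAt J Gy y) :
    ν * ‖x - y‖ ^ 2 ≤ inner ℝ (Gx - Gy) (x - y) := by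
  have hxy := hJ.add_inner_add_le hx hy hGx
  have hyx := hJ.add_inner_add_le hy hx hGy
  rw [norm_sub_rev, ← neg_sub x y, inner_neg_right] at hxy
  rw [inner_sub_left]
  linarith

theorem StrongConvexOn.le_of_lipschitz_gradient {E : Type*} [NormedAddCommGroup E]
    [InnerProductSpace ℝ E] [CompleteSpace E] [Nontrivial E] {J : E → ℝ} {G : E → E} {ν δ : ℝ}
    (hJ : StrongConvexOn univ ν J) (hG : ∀ x, HasGradientAt J (G x) x)
    (hLip : ∀ x y, ‖G x - G y‖ ≤ δ * ‖x - y‖) : ν ≤ δ := by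
  obtain ⟨v, hv⟩ := exists_ne (0 : E)
  have hv' : 0 < ‖v‖ ^ 2 := by positivity
  have hmono := hJ.mul_norm_sq_le_inner_sub (mem_univ v) (mem_univ 0) (hG v) (hG 0)
  have hcs := real_inner_le_norm (G v - G 0) (v - 0)
  have hlip := mul_le_mul_of_nonneg_right (hLip v 0) (norm_nonneg (v - 0))
  rw [sub_zero] at hmono hcs hlip
  nlinarith

theorem IsLocalMin.hasGradientAt_eq_zero {E : Type*} [NormedAddCommGroup E] [InnerProductSpace ℝ E]
    [CompleteSpace E] {f : E → ℝ} {G a : E} (h : IsLocalMin f a) (hf : HasGradientAt f G a) :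
    G = 0 :=
  (toDual ℝ E).injective <| by simpa using h.hasFDerivAt_eq_zero hf.hasFDerivAt

theorem inv_card_mul_sum_norm_sq_eq {ι E : Type*} [Fintype ι] [NormedAddCommGroup E]
    [InnerProductSpace ℝ E] (v : ι → E) {m : E} (hm : (Fintype.card ι : ℝ)⁻¹ • ∑ i, v i = m) :
    (Fintype.card ι : ℝ)⁻¹ * ∑ i, ‖v i‖ ^ 2 =
      ‖m‖ ^ 2 + (Fintype.card ι : ℝ)⁻¹ * ∑ i, ‖m - v i‖ ^ 2 := by
  rcases isEmpty_or_nonempty ι with hι | hι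
  · simp [← hm]
  have hcard : (Fintype.card ι : ℝ) ≠ 0 := by positivity
  have hsum : ∑ i, v i = (Fintype.card ι : ℝ) • m := by
    rw [← hm, smul_smul, mul_inv_cancel₀ hcard, one_smul]
  have hcross : ∑ i, inner ℝ m (v i - m) = 0 := by
    rw [← inner_sum, sum_sub_distrib, hsum, sum_const, card_univ, ← Nat.cast_smul_eq_nsmul ℝ,
      sub_self, inner_zero_right]
  have hexpand : ∀ i, ‖v i‖ ^ 2 = ‖m‖ ^ 2 + 2 * inner ℝ m (v i - m) + ‖m - v i‖ ^ 2 := by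
    intro i
    rw [norm_sub_rev m, ← norm_add_sq_real, add_sub_cancel]
  simp only [hexpand, sum_add_distrib, ← mul_sum, hcross, sum_const, card_univ, nsmul_eq_mul]
  field_simp
  ring

theorem sgd_step_mean_sq_le {ι E : Type*} [Fintype ι] [Nonempty ι] [NormedAddCommGroup E]
    [InnerProductSpace ℝ E] (g : ι → E → E) {G wo x : E} {ν δ σ μ : ℝ}
    (hunbiased : (Fintype.card ι : ℝ)⁻¹ • ∑ n, g n x = G)
    (hnoise : (Fintype.card ι : ℝ)⁻¹ * ∑ n, ‖G - g n x‖ ^ 2 ≤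
      6 * δ ^ 2 * ‖wo - x‖ ^ 2 + 3 * σ ^ 2)
    (hmono : ν * ‖x - wo‖ ^ 2 ≤ inner ℝ G (x - wo)) (hG : ‖G‖ ≤ δ * ‖x - wo‖)
    (hμ0 : 0 ≤ μ) (hμ : 7 * μ * δ ^ 2 ≤ ν) :
    (Fintype.card ι : ℝ)⁻¹ * ∑ n, ‖wo - (x - μ • g n x)‖ ^ 2 ≤
      (1 - μ * ν) * ‖wo - x‖ ^ 2 + 3 * μ ^ 2 * σ ^ 2 := by
  have hcard : (Fintype.card ι : ℝ) ≠ 0 := by positivity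
  have hmean : (Fintype.card ι : ℝ)⁻¹ • ∑ n, (wo - (x - μ • g n x)) = wo - (x - μ • G) := by
    have hsplit : ∀ n, wo - (x - μ • g n x) = (wo - x) + μ • g n x := fun n => by abel
    simp only [hsplit, sum_add_distrib, sum_const, card_univ, ← smul_sum, smul_add,
      ← Nat.cast_smul_eq_nsmul ℝ, smul_smul, inv_mul_cancel₀ hcard, one_smul, smul_comm _ μ,
      hunbiased]
    abel
  have hdev : ∀ n, ‖wo - (x - μ • G) - (wo - (x - μ • g n x))‖ ^ 2 = μ ^ 2 * ‖G - g n x‖ ^ 2 := by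
    intro n
    rw [show wo - (x - μ • G) - (wo - (x - μ • g n x)) = μ • (G - g n x) by module, norm_smul,
      mul_pow, Real.norm_eq_abs, sq_abs]
  have hdrift : ‖wo - (x - μ • G)‖ ^ 2 ≤ (1 - 2 * μ * ν + μ ^ 2 * δ ^ 2) * ‖wo - x‖ ^ 2 := by
    rw [show wo - (x - μ • G) = -((x - wo) - μ • G) by abel, norm_neg, norm_sub_sq_real,
      inner_smul_right, norm_smul, Real.norm_eq_abs, mul_pow, sq_abs, norm_sub_rev x wo]
    rw [norm_sub_rev x wo] at hmono hG
    nlinarith [mul_le_mul hG hG (norm_nonneg _) ((norm_nonneg _).trans hG), real_inner_comm G (x - wo)]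
  rw [inv_card_mul_sum_norm_sq_eq _ hmean]
  simp only [hdev, ← mul_sum]
  rw [mul_left_comm]
  -- `7μ²δ² ≤ μν` absorbs the drift term `μ²δ²` together with the noise term `6μ²δ²`
  nlinarith [mul_le_mul_of_nonneg_left hnoise (sq_nonneg μ), sq_nonneg ‖wo - x‖,
    mul_le_mul_of_nonneg_right hμ (mul_nonneg hμ0 (sq_nonneg ‖wo - x‖))]

theorem le_pow_mul_add_of_le_mul_add {e : ℕ → ℝ} {q C : ℝ} (hq : 0 ≤ q) (hC : 0 ≤ C)
    (h : ∀ i, e (i + 1) ≤ q * e i + (1 - q) * C) (i : ℕ) : e i ≤ q ^ i * e 0 + C := by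
  induction i with
  | zero => simpa using hC
  | succ i ih =>
    calc e (i + 1) ≤ q * e i + (1 - q) * C := h i
      _ ≤ q * (q ^ i * e 0 + C) + (1 - q) * C := by gcongr
      _ = q ^ (i + 1) * e 0 + C := by ring

def padSeq {α : Type*} {i : ℕ} (d : α) (τ : Fin i → α) : ℕ → α :=
  fun j => if h : j < i then τ ⟨j, h⟩ else d

theorem padSeq_snoc_of_lt {α : Type*} {i j : ℕ} (d : α) (τ : Fin i → α) (a : α) (hj : j < i) :
    padSeq d (Fin.snoc τ a : Fin (i + 1) → α) j = padSeq d τ j := by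
  simp only [padSeq, dif_pos hj, dif_pos (Nat.lt_succ_of_lt hj)]
  exact Fin.snoc_castSucc (α := fun _ => α) a τ ⟨j, hj⟩

theorem padSeq_snoc_self {α : Type*} {i : ℕ} (d : α) (τ : Fin i → α) (a : α) :
    padSeq d (Fin.snoc τ a : Fin (i + 1) → α) i = a := by
  simp only [padSeq, dif_pos (Nat.lt_succ_self i)]
  exact Fin.snoc_last (α := fun _ => α) a τ

theorem Fin.sum_univ_pi_eq_sum_snoc {α M : Type*} [Fintype α] [AddCommMonoid M] {i : ℕ}
    (F : (Fin (i + 1) → α) → M) : ∑ f, F f = ∑ τ : Fin i → α, ∑ a, F (Fin.snoc τ a) := by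
  rw [← (Fin.snocEquiv fun _ => α).sum_comp, Fintype.sum_prod_type, Finset.sum_comm]
  rfl

section Iterates

variable {α E : Type*} {Φ : α → E → E} {w : ℕ → (ℕ → α) → E} {w0 : E}

theorem iterate_congr_of_eqOn_lt (hw0 : ∀ ω, w 0 ω = w0)
    (hupd : ∀ i ω, w (i + 1) ω = Φ (ω i) (w i ω)) {k : ℕ} {ω ω' : ℕ → α}
    (h : ∀ j < k, ω j = ω' j) : w k ω = w k ω' := by
  induction k with
  | zero => rw [hw0, hw0]
  | succ k ih =>
    rw [hupd, hupd, ih fun j hj => h j (Nat.lt_succ_of_lt hj), h k (Nat.lt_succ_self k)]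

theorem iterate_padSeq_snoc (hw0 : ∀ ω, w 0 ω = w0)
    (hupd : ∀ i ω, w (i + 1) ω = Φ (ω i) (w i ω)) {i : ℕ} (d : α) (τ : Fin i → α) (a : α) :
    w (i + 1) (padSeq d (Fin.snoc τ a : Fin (i + 1) → α)) = Φ a (w i (padSeq d τ)) := by
  rw [hupd, padSeq_snoc_self,
    iterate_congr_of_eqOn_lt hw0 hupd fun j hj => padSeq_snoc_of_lt d τ a hj]

theorem mean_iterate_succ_le [Fintype α] (hw0 : ∀ ω, w 0 ω = w0)
    (hupd : ∀ i ω, w (i + 1) ω = Φ (ω i) (w i ω)) (d : α) {φ : E → ℝ} {q b : ℝ}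
    (hstep : ∀ x, (Fintype.card α : ℝ)⁻¹ * ∑ a, φ (Φ a x) ≤ q * φ x + b) (i : ℕ) :
    ((Fintype.card α : ℝ) ^ (i + 1))⁻¹ * ∑ τ : Fin (i + 1) → α, φ (w (i + 1) (padSeq d τ)) ≤
      q * (((Fintype.card α : ℝ) ^ i)⁻¹ * ∑ τ : Fin i → α, φ (w i (padSeq d τ))) + b := by
  have : Nonempty α := ⟨d⟩
  have hcard : (Fintype.card α : ℝ) ≠ 0 := Nat.cast_ne_zero.mpr Fintype.card_ne_zero
  calc ((Fintype.card α : ℝ) ^ (i + 1))⁻¹ * ∑ τ : Fin (i + 1) → α, φ (w (i + 1) (padSeq d τ))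
      = ((Fintype.card α : ℝ) ^ i)⁻¹ * ∑ τ : Fin i → α,
          (Fintype.card α : ℝ)⁻¹ * ∑ a, φ (Φ a (w i (padSeq d τ))) := by
        simp only [Fin.sum_univ_pi_eq_sum_snoc, iterate_padSeq_snoc hw0 hupd, ← mul_sum, pow_succ,
          mul_inv, mul_assoc]
    _ ≤ ((Fintype.card α : ℝ) ^ i)⁻¹ * ∑ τ : Fin i → α, (q * φ (w i (padSeq d τ)) + b) := by
        gcongr with τ; exact hstep _
    _ = q * (((Fintype.card α : ℝ) ^ i)⁻¹ * ∑ τ : Fin i → α, φ (w i (padSeq d τ))) + b := by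
        rw [sum_add_distrib, ← mul_sum, sum_const, card_univ, Fintype.card_fun, Fintype.card_fin,
          nsmul_eq_mul, Nat.cast_pow]
        field_simp

end Iterates

/-- Convergence of SGD under strong convexity: if `J` is `ν`-strongly convex with
minimizer `w°`, the stochastic gradient `g` (uniform over `N` components) is unbiased
and satisfies `E‖∇J(w) - g(w)‖² ≤ 6δ²‖w°-w‖² + 3σ²`, and the gradient of `J` is
`δ`-Lipschitz, then the SGD iterates `w_i = w_{i-1} - μ g(w_{i-1})` with
`0 < μ < ν/(7δ²)` satisfy `E‖w° - w_i‖² ≤ (1-μν)^i ‖w° - w_0‖² + 3μσ²/ν`.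
The expectation is over the i.i.d. uniform index sequence, written as an average
over all `(Fin i → Fin N)` index tuples. -/
theorem sgd_convergence
    {E : Type*} [NormedAddCommGroup E] [InnerProductSpace ℝ E] [CompleteSpace E]
    {N : ℕ} (hN : 0 < N)
    (g : Fin N → E → E) (J : E → ℝ) (gradJ : E → E)
    (δ ν σ μ : ℝ) (wo w0 : E) (w : ℕ → (ℕ → Fin N) → E)
    (hgrad : ∀ x, HasGradientAt J (gradJ x) x)
    (hsc : StrongConvexOn Set.univ ν J)
    (hmin : IsMinOn J Set.univ wo)
    (hunbiased : ∀ x, (N : ℝ)⁻¹ • ∑ n, g n x = gradJ x)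
    (hnoise : ∀ x, (N : ℝ)⁻¹ * ∑ n, ‖gradJ x - g n x‖ ^ 2 ≤
      6 * δ ^ 2 * ‖wo - x‖ ^ 2 + 3 * σ ^ 2)
    (hLip : ∀ x y, ‖gradJ x - gradJ y‖ ≤ δ * ‖x - y‖)
    (hν : 0 < ν) (hδ : 0 < δ) (hμ0 : 0 < μ) (hμ : μ < ν / (7 * δ ^ 2))
    (hw0 : ∀ ω, w 0 ω = w0)
    (hupd : ∀ i ω, w (i + 1) ω = w i ω - μ • g (ω i) (w i ω))
    (i : ℕ) :
    ((N : ℝ) ^ i)⁻¹ *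
        ∑ ωf : Fin i → Fin N,
          ‖wo - w i (fun j => if h : j < i then ωf ⟨j, h⟩ else ⟨0, hN⟩)‖ ^ 2 ≤
      (1 - μ * ν) ^ i * ‖wo - w0‖ ^ 2 + 3 * μ * σ ^ 2 / ν := by
  rcases subsingleton_or_nontrivial E with hE | hE
  · have hzero : ∀ x : E, wo - x = 0 := fun x => Subsingleton.elim _ _
    simp only [hzero, norm_zero, ne_eq, OfNat.ofNat_ne_zero, not_false_eq_true, zero_pow,
      sum_const_zero, mul_zero, zero_add]
    positivity
  have hgwo : gradJ wo = 0 := (hmin.isLocalMin Filter.univ_mem).hasGradientAt_eq_zero (hgrad wo)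
  have hμ' : 7 * μ * δ ^ 2 < ν := by
    rw [lt_div_iff₀ (by positivity)] at hμ; linarith
  have hq : 0 ≤ 1 - μ * ν := by
    nlinarith [hsc.le_of_lipschitz_gradient hgrad hLip, mul_pos hμ0 hν]
  have hstep : ∀ x, (Fintype.card (Fin N) : ℝ)⁻¹ * ∑ n, ‖wo - (x - μ • g n x)‖ ^ 2 ≤
      (1 - μ * ν) * ‖wo - x‖ ^ 2 + (1 - (1 - μ * ν)) * (3 * μ * σ ^ 2 / ν) := by
    intro x
    have hmono := hsc.mul_norm_sq_le_inner_sub (mem_univ x) (mem_univ wo) (hgrad x) (hgrad wo)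
    have hbound := hLip x wo
    rw [hgwo, sub_zero] at hmono hbound
    have : Nonempty (Fin N) := ⟨⟨0, hN⟩⟩
    convert sgd_step_mean_sq_le g (by simpa using hunbiased x) (by simpa using hnoise x) hmono
      hbound hμ0.le hμ'.le using 2
    field_simp
    ring
  have key := le_pow_mul_add_of_le_mul_add (C := 3 * μ * σ ^ 2 / ν) (e := fun i =>
      ((Fintype.card (Fin N) : ℝ) ^ i)⁻¹ * ∑ τ : Fin i → Fin N, ‖wo - w i (padSeq ⟨0, hN⟩ τ)‖ ^ 2)
      hq (by positivity)
      (fun i => mean_iterate_succ_le (Φ := fun n x => x - μ • g n x)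
        (φ := fun x => ‖wo - x‖ ^ 2) hw0 hupd ⟨0, hN⟩ hstep i) i
  simp only [Fintype.card_fin, pow_zero, inv_one, one_mul, hw0, Fintype.sum_unique] at key
  exact key
end

section
/- Consider the conditional one-step inequality of α-SVRG: if J is ν-strongly convex, ∇J is δ-Lipschitz, and the α-SVRG estimator noise satisfies the bound of Lemma 3, then for the update w_i = w_{i-1} - μ g_α(w_{i-1}) with snapshot w̄_{i-1}: E[‖w° - w_i‖² | w_{i-1}, w̄_{i-1}] ≤ (1 - 2μν + (2α+7)μ²δ²)‖w° - w_{i-1}‖² + 8αδ²μ²‖w° - w̄_{i-1}‖² + 3(1-α)σ²μ². -/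
/-!
Averaged over the sample index, the α-SVRG direction has mean `∇J x` (the snapshot
correction averages to zero), so the mean squared distance to `w°` splits, as a bias–variance
decomposition, into the squared distance after the exact gradient step `x - μ ∇J x` plus `μ²`
times the estimator noise. Strong convexity makes `∇J` strongly monotone, so
`⟪∇J x, x - w°⟫ ≥ ν ‖x - w°‖²`, and since `∇J w° = 0` the Lipschitz bound gives
`‖∇J x‖ ≤ δ ‖x - w°‖`; hence the exact step contracts `‖w° - x‖²` by `1 - 2μν + μ²δ²`, and the
noise is bounded by hypothesis.
-/

open InnerProductSpace Set Finset

section Gradient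

variable {E : Type*} [NormedAddCommGroup E] [InnerProductSpace ℝ E] [CompleteSpace E]
  {f : E → ℝ} {g x : E}

theorem HasGradientAt.fun_sum {ι : Type*} (s : Finset ι) {f : ι → E → ℝ} {g : ι → E}
    (h : ∀ i ∈ s, HasGradientAt (f i) (g i) x) :
    HasGradientAt (fun y => ∑ i ∈ s, f i y) (∑ i ∈ s, g i) x := by
  rw [hasGradientAt_iff_hasFDerivAt, map_sum]
  exact HasFDerivAt.fun_sum fun i hi => hasGradientAt_iff_hasFDerivAt.mp (h i hi)

theorem HasGradientAt.const_mul (h : HasGradientAt f g x) (c : ℝ) :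
    HasGradientAt (fun y => c * f y) (c • g) x := by
  rw [hasGradientAt_iff_hasFDerivAt, map_smul]
  exact (hasGradientAt_iff_hasFDerivAt.mp h).const_mul c

theorem IsLocalMin.hasGradientAt_eq_zero_s7 (hmin : IsLocalMin f x) (h : HasGradientAt f g x) :
    g = 0 :=
  (toDual ℝ E).injective <| by
    simpa using hmin.hasFDerivAt_eq_zero (hasGradientAt_iff_hasFDerivAt.mp h)

end Gradient

theorem ConvexOn.add_le_of_hasFDerivAt {E : Type*} [NormedAddCommGroup E] [NormedSpace ℝ E]
    {f : E → ℝ} {f' : E →L[ℝ] ℝ} {x : E} (hf : ConvexOn ℝ univ f) (hx : HasFDerivAt f f' x)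
    (y : E) : f x + f' (y - x) ≤ f y := by
  let ℓ : ℝ →ᵃ[ℝ] E := AffineMap.lineMap x y
  have hline : ConvexOn ℝ univ (f ∘ ℓ) := hf.comp_affineMap ℓ
  have hderiv : HasDerivAt (f ∘ ℓ) (f' (y - x)) 0 :=
    (by simpa [ℓ] using hx : HasFDerivAt f f' (ℓ 0)).comp_hasDerivAt 0 AffineMap.hasDerivAt_lineMap
  have := hline.le_slope_of_hasDerivAt (mem_univ 0) (mem_univ 1) zero_lt_one hderiv
  simp only [slope_def_field, Function.comp_apply, ℓ, AffineMap.lineMap_apply_zero,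
    AffineMap.lineMap_apply_one, sub_zero, div_one] at this
  linarith

section StrongConvex

variable {E : Type*} [NormedAddCommGroup E] [InnerProductSpace ℝ E] [CompleteSpace E]
  {f : E → ℝ} {g g' x y : E} {m : ℝ}

theorem StrongConvexOn.add_inner_add_le_of_hasGradientAt (hf : StrongConvexOn univ m f)
    (hx : HasGradientAt f g x) (y : E) :
    f x + ⟪g, y - x⟫_ℝ + m / 2 * ‖y - x‖ ^ 2 ≤ f y := by
  have hderiv := (hasGradientAt_iff_hasFDerivAt.mp hx).sub
    ((hasStrictFDerivAt_norm_sq x).hasFDerivAt.const_mul (m / 2))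
  have := (strongConvexOn_iff_convex.mp hf).add_le_of_hasFDerivAt hderiv y
  simp only [sub_apply, toDual_apply_apply, smul_apply,
    coe_innerSL_apply, nsmul_eq_mul, Nat.cast_ofNat, smul_eq_mul] at this
  have hsq : ‖y - x‖ ^ 2 = ‖y‖ ^ 2 - ‖x‖ ^ 2 - 2 * ⟪x, y - x⟫_ℝ := by
    rw [norm_sub_sq_real, inner_sub_right, real_inner_self_eq_norm_sq, real_inner_comm]
    ring
  rw [hsq]
  linarith

theorem StrongConvexOn.mul_norm_sq_le_inner_sub_of_hasGradientAt (hf : StrongConvexOn univ m f)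
    (hx : HasGradientAt f g x) (hy : HasGradientAt f g' y) :
    m * ‖x - y‖ ^ 2 ≤ ⟪g - g', x - y⟫_ℝ := by
  have hxy := hf.add_inner_add_le_of_hasGradientAt hx y
  have hyx := hf.add_inner_add_le_of_hasGradientAt hy x
  rw [← neg_sub x y, inner_neg_right, norm_neg] at hxy
  rw [inner_sub_left]
  linarith

theorem StrongConvexOn.norm_sub_sub_smul_sq_le_of_hasGradientAt {w : E} {L μ : ℝ}
    (hf : StrongConvexOn univ m f) (hw : HasGradientAt f 0 w) (hx : HasGradientAt f g x)
    (hg : ‖g‖ ≤ L * ‖x - w‖) (hμ : 0 ≤ μ) :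
    ‖w - (x - μ • g)‖ ^ 2 ≤ (1 - 2 * μ * m + μ ^ 2 * L ^ 2) * ‖w - x‖ ^ 2 := by
  have hmono := hf.mul_norm_sq_le_inner_sub_of_hasGradientAt hx hw
  rw [sub_zero, ← neg_sub w x, inner_neg_right, norm_neg] at hmono
  have hg_sq : ‖g‖ ^ 2 ≤ L ^ 2 * ‖w - x‖ ^ 2 := by
    rw [← mul_pow, norm_sub_rev]
    exact pow_le_pow_left₀ (norm_nonneg g) hg 2
  calc ‖w - (x - μ • g)‖ ^ 2 = ‖w - x‖ ^ 2 + 2 * μ * ⟪g, w - x⟫_ℝ + μ ^ 2 * ‖g‖ ^ 2 := by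
        rw [sub_sub_eq_add_sub, add_sub_right_comm, norm_add_sq_real, inner_smul_right,
          norm_smul, Real.norm_eq_abs, mul_pow, sq_abs, real_inner_comm]
        ring
    _ ≤ ‖w - x‖ ^ 2 + 2 * μ * (-(m * ‖w - x‖ ^ 2)) + μ ^ 2 * (L ^ 2 * ‖w - x‖ ^ 2) := by
        gcongr
        linarith
    _ = (1 - 2 * μ * m + μ ^ 2 * L ^ 2) * ‖w - x‖ ^ 2 := by ring

end StrongConvex

theorem Finset.sum_norm_sq_eq_card_mul_norm_sq_add {E ι : Type*} [NormedAddCommGroup E]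
    [InnerProductSpace ℝ E] (s : Finset ι) (u : ι → E) {c : E}
    (hc : ∑ i ∈ s, u i = (#s : ℝ) • c) :
    ∑ i ∈ s, ‖u i‖ ^ 2 = #s * ‖c‖ ^ 2 + ∑ i ∈ s, ‖c - u i‖ ^ 2 := by
  simp_rw [norm_sub_sq_real c, sum_add_distrib, sum_sub_distrib, ← mul_sum, ← inner_sum, hc,
    sum_const, inner_smul_right, real_inner_self_eq_norm_sq, nsmul_eq_mul]
  ring

theorem Finset.sum_norm_sub_sub_smul_sq {E ι : Type*} [NormedAddCommGroup E]
    [InnerProductSpace ℝ E] (s : Finset ι) (w x : E) (μ : ℝ) (g : ι → E) {G : E}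
    (hG : ∑ i ∈ s, g i = (#s : ℝ) • G) :
    ∑ i ∈ s, ‖w - (x - μ • g i)‖ ^ 2
      = #s * ‖w - (x - μ • G)‖ ^ 2 + μ ^ 2 * ∑ i ∈ s, ‖G - g i‖ ^ 2 := by
  have hmean : ∑ i ∈ s, (w - (x - μ • g i)) = (#s : ℝ) • (w - (x - μ • G)) := by
    simp [sum_sub_distrib, ← smul_sum, hG, smul_sub, smul_comm μ, Nat.cast_smul_eq_nsmul]
  rw [sum_norm_sq_eq_card_mul_norm_sq_add s _ hmean, mul_sum]
  congr 2 with i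
  rw [sub_sub_sub_cancel_left, sub_sub_sub_cancel_left, ← smul_sub, norm_smul, mul_pow,
    Real.norm_eq_abs, sq_abs]

theorem alpha_svrg_one_step_general
    {E : Type*} [NormedAddCommGroup E] [InnerProductSpace ℝ E] [CompleteSpace E]
    {N : ℕ} (hN : 0 < N)
    (Q : Fin N → E → ℝ) (gradQ : Fin N → E → E) (J : E → ℝ) (gradJ : E → E)
    (δ ν σ μ α : ℝ) (wo : E)
    (hμ : 0 < μ)
    (hQ : ∀ n x, HasGradientAt (Q n) (gradQ n x) x)
    (hJ : ∀ x, J x = (N : ℝ)⁻¹ * ∑ n, Q n x)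
    (hgradJ : ∀ x, gradJ x = (N : ℝ)⁻¹ • ∑ n, gradQ n x)
    (hsc : StrongConvexOn Set.univ ν J)
    (hmin : IsMinOn J Set.univ wo)
    (hLipJ : ∀ x y, ‖gradJ x - gradJ y‖ ≤ δ * ‖x - y‖)
    (hnoise : ∀ x xbar : E, (N : ℝ)⁻¹ * ∑ n,
        ‖gradJ x - (α • (gradJ xbar - gradQ n xbar) + gradQ n x)‖ ^ 2 ≤
      (2 * α + 6) * δ ^ 2 * ‖wo - x‖ ^ 2 + 8 * α * δ ^ 2 * ‖wo - xbar‖ ^ 2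
        + 3 * (1 - α) * σ ^ 2)
    (x xbar : E) :
    (N : ℝ)⁻¹ * ∑ n,
        ‖wo - (x - μ • (α • (gradJ xbar - gradQ n xbar) + gradQ n x))‖ ^ 2 ≤
      (1 - 2 * μ * ν + (2 * α + 7) * μ ^ 2 * δ ^ 2) * ‖wo - x‖ ^ 2
        + 8 * α * δ ^ 2 * μ ^ 2 * ‖wo - xbar‖ ^ 2
        + 3 * (1 - α) * σ ^ 2 * μ ^ 2 := by
  set g : Fin N → E := fun n => α • (gradJ xbar - gradQ n xbar) + gradQ n x
  show (N : ℝ)⁻¹ * ∑ n, ‖wo - (x - μ • g n)‖ ^ 2 ≤ _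
  have hgrad (y : E) : HasGradientAt J (gradJ y) y := by
    rw [funext hJ, hgradJ]
    exact (HasGradientAt.fun_sum univ fun n _ => hQ n y).const_mul _
  have hgrad_wo : gradJ wo = 0 :=
    (hmin.isLocalMin Filter.univ_mem).hasGradientAt_eq_zero_s7 (hgrad wo)
  have hstep := hsc.norm_sub_sub_smul_sq_le_of_hasGradientAt (hgrad_wo ▸ hgrad wo) (hgrad x)
    (by simpa [hgrad_wo] using hLipJ x wo) hμ.le
  have hunbiased : ∑ n, g n = (N : ℝ) • gradJ x := by
    have hsum_gradQ (y : E) : ∑ n, gradQ n y = (N : ℝ) • gradJ y := by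
      rw [hgradJ, smul_inv_smul₀ (Nat.cast_ne_zero.mpr hN.ne')]
    simp [g, sum_add_distrib, ← smul_sum, sum_sub_distrib, hsum_gradQ, Nat.cast_smul_eq_nsmul]
  rw [sum_norm_sub_sub_smul_sq univ wo x μ g (by rwa [card_univ, Fintype.card_fin]), card_univ,
    Fintype.card_fin]
  calc (N : ℝ)⁻¹ * (N * ‖wo - (x - μ • gradJ x)‖ ^ 2 + μ ^ 2 * ∑ n, ‖gradJ x - g n‖ ^ 2)
      = ‖wo - (x - μ • gradJ x)‖ ^ 2 + μ ^ 2 * ((N : ℝ)⁻¹ * ∑ n, ‖gradJ x - g n‖ ^ 2) := by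
        field_simp
    _ ≤ (1 - 2 * μ * ν + μ ^ 2 * δ ^ 2) * ‖wo - x‖ ^ 2 + μ ^ 2 * ((2 * α + 6) * δ ^ 2 *
          ‖wo - x‖ ^ 2 + 8 * α * δ ^ 2 * ‖wo - xbar‖ ^ 2 + 3 * (1 - α) * σ ^ 2) := by
        gcongr
        exact hnoise x xbar
    _ = _ := by ring

/-- Conditional one-step inequality of α-SVRG: given the current iterate `x` and
snapshot `xbar`, the update `x - μ g_α(x)` with
`g_α(x) = α(∇J(xbar) - ∇Q(xbar;xᵢ)) + ∇Q(x;xᵢ)`, `i` uniform on `{1,…,N}`, satisfies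
`E‖w° - x₊‖² ≤ (1 - 2μν + (2α+7)μ²δ²)‖w° - x‖² + 8αδ²μ²‖w° - xbar‖² + 3(1-α)σ²μ²`. -/
theorem alpha_svrg_one_step
    {E : Type*} [NormedAddCommGroup E] [InnerProductSpace ℝ E] [CompleteSpace E]
    {N : ℕ} (hN : 0 < N)
    (Q : Fin N → E → ℝ) (gradQ : Fin N → E → E) (J : E → ℝ) (gradJ : E → E)
    (δn : Fin N → ℝ) (δ ν σ μ α : ℝ) (wo : E)
    (hα0 : 0 ≤ α) (hα1 : α ≤ 1) (hμ : 0 < μ) (hν : 0 < ν)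
    (hQ : ∀ n x, HasGradientAt (Q n) (gradQ n x) x)
    (hJ : ∀ x, J x = (N : ℝ)⁻¹ * ∑ n, Q n x)
    (hgradJ : ∀ x, gradJ x = (N : ℝ)⁻¹ • ∑ n, gradQ n x)
    (hLipn : ∀ n x y, ‖gradQ n x - gradQ n y‖ ≤ δn n * ‖x - y‖)
    (hδ : δ ^ 2 = (N : ℝ)⁻¹ * ∑ n, δn n ^ 2)
    (hσ : σ ^ 2 = (N : ℝ)⁻¹ * ∑ n, ‖gradQ n wo‖ ^ 2)
    (hsc : StrongConvexOn Set.univ ν J)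
    (hmin : IsMinOn J Set.univ wo)
    (hLipJ : ∀ x y, ‖gradJ x - gradJ y‖ ≤ δ * ‖x - y‖)
    (hnoise : ∀ x xbar : E, (N : ℝ)⁻¹ * ∑ n,
        ‖gradJ x - (α • (gradJ xbar - gradQ n xbar) + gradQ n x)‖ ^ 2 ≤
      (2 * α + 6) * δ ^ 2 * ‖wo - x‖ ^ 2 + 8 * α * δ ^ 2 * ‖wo - xbar‖ ^ 2
        + 3 * (1 - α) * σ ^ 2)
    (x xbar : E) :
    (N : ℝ)⁻¹ * ∑ n,
        ‖wo - (x - μ • (α • (gradJ xbar - gradQ n xbar) + gradQ n x))‖ ^ 2 ≤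
      (1 - 2 * μ * ν + (2 * α + 7) * μ ^ 2 * δ ^ 2) * ‖wo - x‖ ^ 2
        + 8 * α * δ ^ 2 * μ ^ 2 * ‖wo - xbar‖ ^ 2
        + 3 * (1 - α) * σ ^ 2 * μ ^ 2 :=
  alpha_svrg_one_step_general hN Q gradQ J gradJ δ ν σ μ α wo hμ hQ hJ hgradJ hsc hmin hLipJ hnoise
    x xbar
end
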